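/- For a finite graded module M over a standard-graded Artinian algebra A with Hilbert function H(M), and any linear form ℓ ∈ A_1, the Jordan type satisfies P_{ℓ,M} ≤ P_c(H(M)) in the dominance partial order, where P_c(H(M)) is the contiguous partition of H(M). -/

import Mathlib

/-! ### Partitions, dominance order, Jordan type -/

/-- Sum of the `i` largest parts of a partition given as a multiset. -/
noncomputable def partialSum (P : Multiset ℕ) (i : ℕ) : ℕ :=
  ((P.sort (· ≤ ·)).reverse.take i).sum

/-- Dominance partial order on partitions (given as multisets of parts). -/
def DomLE (P Q : Multiset ℕ) : Prop := ∀ i, partialSum P i ≤ partialSum Q i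

/-- The conjugate partition (switch rows and columns of the Ferrers diagram);
since it is defined through the multiset of parts, it incorporates the
nonincreasing rearrangement. -/
noncomputable def conjugatePartition (P : Multiset ℕ) : Multiset ℕ :=
  ((Multiset.range P.sum).map fun i => (P.filter fun p => i < p).card).filter (0 < ·)

/-- The Jordan type of a (nilpotent) endomorphism `f` of a finite-dimensional
vector space: the multiset of sizes of the Jordan blocks of `f`.  The number of
blocks of size `p` is `rank f^(p-1) - 2 rank f^p + rank f^(p+1)`. -/
noncomputable def jordanType (k : Type*) {V : Type*} [Field k] [AddCommGroup V] [Module k V]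
    (f : Module.End k V) : Multiset ℕ :=
  (Multiset.range (Module.finrank k V)).bind fun p =>
    Multiset.replicate
      (Module.finrank k (LinearMap.range (f ^ p)) +
        Module.finrank k (LinearMap.range (f ^ (p + 2))) -
        2 * Module.finrank k (LinearMap.range (f ^ (p + 1)))) (p + 1)
/-! ### The contiguous partition `P_c(H)` of a Hilbert function -/

/-- The contiguous partition of `H` (with support contained in `[0,N]`):
its parts are the lengths of the maximal contiguous row segments of the
bar graph of `H`; the row at height `r+1` occupies the columns `i` with
`H i ≥ r+1`, and a maximal segment starting at column `i` has length
`min {L | H (i+L) < r+1}`. -/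
noncomputable def contiguousPartition (H : ℕ → ℕ) (N : ℕ) : Multiset ℕ :=
  (Multiset.range ((Finset.range (N + 1)).sup H)).bind fun r =>
    (Multiset.range (N + 1)).filterMap fun i =>
      if (r + 1 ≤ H i) ∧ (i = 0 ∨ H (i - 1) < r + 1) then
        some (sInf {L | H (i + L) < r + 1})
      else none

/-!
For partitions, `partialSum P i = min_t (i t + ∑_{p ∈ P} (p - t))`, the minimum being attained at
the `(i+1)`-st largest part; so `P ≤ Q` follows once `∑_{p ∈ P} (p - t) ≤ ∑_{q ∈ Q} (q - t)` for
every `t`. For the Jordan type of `f = ℓ·` the left side is at most `rank f^t`. As `f^s` maps `M_d`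
into `M_{d+s}`, the image `f^t M_d` has dimension at most `H(d+s)` for every `s ≤ t`, and
`rank f^t ≤ ∑_d min_{s ≤ t} H(d+s)`. Counting this sum row by row in the bar graph of `H`, a column
`d` is counted in a row only if the row segment through `d` continues for `t` more columns, so a
segment of length `L` is counted at most `L - t` times: the total is `∑_{q ∈ P_c(H)} (q - t)`.
-/

namespace List

theorem sum_take_le_mul_add_sum_tsub (l : List ℕ) (i t : ℕ) :
    (l.take i).sum ≤ i * t + (l.map (· - t)).sum := by
  induction l generalizing i with
  | nil => simp
  | cons x l ih =>
    cases i with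
    | zero => simp
    | succ i =>
      have := ih i
      simp only [take_succ_cons, sum_cons, map_cons, add_mul, one_mul]
      omega

theorem mul_add_sum_tsub_getD_le_sum_take {l : List ℕ} (hl : l.Pairwise (· ≥ ·)) (i : ℕ) :
    i * l.getD i 0 + (l.map (· - l.getD i 0)).sum ≤ (l.take i).sum := by
  induction l generalizing i with
  | nil => simp
  | cons x l ih =>
    rw [pairwise_cons] at hl
    cases i with
    | zero =>
      have : ∀ y ∈ l, y - x = 0 := fun y hy => Nat.sub_eq_zero_of_le (hl.1 y hy)
      simp [sum_eq_zero (l := l.map (· - x)) (by simpa using this)]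
    | succ i =>
      have hx : l.getD i 0 ≤ x := by
        rcases lt_or_ge i l.length with h | h
        · rw [getD_eq_getElem _ _ h]; exact hl.1 _ (getElem_mem h)
        · rw [getD_eq_default _ _ h]; exact Nat.zero_le x
      have := ih hl.2 i
      simp only [getD_cons_succ, take_succ_cons, sum_cons, map_cons, add_mul, one_mul]
      omega

end List

theorem Multiset.sum_map_sort_reverse {α β : Type*} [LinearOrder α] [AddCommMonoid β]
    (P : Multiset α) (g : α → β) :
    (((P.sort (· ≤ ·)).reverse).map g).sum = (P.map g).sum := by
  rw [List.map_reverse, List.sum_reverse, ← Multiset.sum_coe, ← Multiset.map_coe,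
    Multiset.sort_eq]

theorem domLE_of_forall_sum_map_tsub_le {P Q : Multiset ℕ}
    (h : ∀ t, (P.map (· - t)).sum ≤ (Q.map (· - t)).sum) : DomLE P Q := by
  intro i
  set l := (Q.sort (· ≤ ·)).reverse
  have hl : l.Pairwise (· ≥ ·) := List.pairwise_reverse.2 (Multiset.pairwise_sort Q _)
  set t := l.getD i 0
  calc partialSum P i ≤ i * t + (P.map (· - t)).sum := by
        rw [partialSum, ← P.sum_map_sort_reverse]
        exact List.sum_take_le_mul_add_sum_tsub _ i t
    _ ≤ i * t + (l.map (· - t)).sum := by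
        rw [Q.sum_map_sort_reverse]; gcongr; exact h t
    _ ≤ partialSum Q i := List.mul_add_sum_tsub_getD_le_sum_take hl i

theorem sum_secondDiff_mul_tsub_le {r : ℕ → ℕ} (hr : Antitone r)
    (hconv : ∀ p, 2 * r (p + 1) ≤ r p + r (p + 2)) (t D : ℕ) :
    ∑ p ∈ Finset.range D, (r p + r (p + 2) - 2 * r (p + 1)) * (p + 1 - t) ≤ r t := by
  -- summation by parts: for `t ≤ n` the sum up to `n` is
  -- `∑_{t ≤ p < n} (r p - r (p + 1)) - (n - t) (r n - r (n + 1))`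
  suffices h : ∀ n, ∑ p ∈ Finset.range n, (r p + r (p + 2) - 2 * r (p + 1)) * (p + 1 - t)
      + (r n - r (n + 1)) * (n - t) ≤ r t - r n from
    (Nat.le_add_right _ _).trans <| (h D).trans (Nat.sub_le _ _)
  intro n
  induction n with
  | zero => simp
  | succ n ih =>
    have hn := hconv n
    have hn₀ : r (n + 1) ≤ r n := hr (by omega)
    have hn₁ : r (n + 2) ≤ r (n + 1) := hr (by omega)
    have hsplit :
        r n + r (n + 2) - 2 * r (n + 1) + (r (n + 1) - r (n + 2)) = r n - r (n + 1) := by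
      omega
    rw [Finset.sum_range_succ, add_assoc, ← add_mul, hsplit]
    rcases lt_or_ge n t with hnt | hnt
    · rw [show n - t = 0 by omega, mul_zero, add_zero] at ih
      rw [show n + 1 - t = 0 by omega, mul_zero, add_zero]
      omega
    · rw [show n + 1 - t = n - t + 1 by omega, mul_add_one]
      have := hr hnt
      omega

open Module LinearMap

theorem Submodule.finrank_map_add_finrank_inf_ker {K V W : Type*} [Field K] [AddCommGroup V]
    [Module K V] [FiniteDimensional K V] [AddCommGroup W] [Module K W] (f : V →ₗ[K] W)
    (U : Submodule K V) : finrank K (U.map f) + finrank K ↥(U ⊓ ker f) = finrank K U := by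
  have hker : ker (f.domRestrict U) = (U ⊓ ker f).comap U.subtype := by
    rw [ker_domRestrict, Submodule.comap_inf, Submodule.comap_subtype_self, top_inf_eq]
  rw [← (f.domRestrict U).finrank_range_add_finrank_ker, range_domRestrict, hker,
    (Submodule.comapSubtypeEquivOfLe inf_le_left).finrank_eq]

theorem LinearMap.range_pow_succ_le {R M : Type*} [Semiring R] [AddCommMonoid M] [Module R M]
    (f : Module.End R M) (p : ℕ) : range (f ^ (p + 1)) ≤ range (f ^ p) := by
  rw [pow_succ]
  exact range_comp_le_range _ _

section JordanType

variable {k V : Type*} [Field k] [AddCommGroup V] [Module k V] [FiniteDimensional k V]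
  (f : Module.End k V)

theorem finrank_range_pow_antitone : Antitone fun p => finrank k (range (f ^ p)) :=
  antitone_nat_of_succ_le fun p => Submodule.finrank_mono (range_pow_succ_le f p)

theorem finrank_range_pow_convex (p : ℕ) :
    2 * finrank k (range (f ^ (p + 1))) ≤
      finrank k (range (f ^ p)) + finrank k (range (f ^ (p + 2))) := by
  have hmap : ∀ q, (range (f ^ q)).map f = range (f ^ (q + 1)) := fun q => by
    rw [pow_succ', Module.End.mul_eq_comp, range_comp]
  have h₀ := Submodule.finrank_map_add_finrank_inf_ker f (range (f ^ p))
  have h₁ := Submodule.finrank_map_add_finrank_inf_ker f (range (f ^ (p + 1)))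
  have hker : finrank k ↥(range (f ^ (p + 1)) ⊓ ker f) ≤ finrank k ↥(range (f ^ p) ⊓ ker f) :=
    Submodule.finrank_mono (inf_le_inf_right _ (range_pow_succ_le f p))
  rw [hmap] at h₀
  rw [hmap, show p + 1 + 1 = p + 2 from rfl] at h₁
  omega

theorem sum_map_tsub_jordanType_le (t : ℕ) :
    ((jordanType k f).map (· - t)).sum ≤ finrank k (range (f ^ t)) := by
  rw [jordanType, Multiset.map_bind, Multiset.sum_bind]
  simp only [Multiset.map_replicate, Multiset.sum_replicate, smul_eq_mul]
  exact sum_secondDiff_mul_tsub_le (finrank_range_pow_antitone f) (finrank_range_pow_convex f) t _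

end JordanType

theorem Submodule.finrank_finset_sup_le_sum {K V ι : Type*} [Field K] [AddCommGroup V]
    [Module K V] [FiniteDimensional K V] (s : Finset ι) (U : ι → Submodule K V) :
    finrank K ↥(s.sup U) ≤ ∑ i ∈ s, finrank K (U i) := by
  classical
  induction s using Finset.induction_on with
  | empty => simp
  | insert a s ha ih =>
    rw [Finset.sup_insert, Finset.sum_insert ha]
    exact (Submodule.finrank_add_le_finrank_add_finrank _ _).trans (by gcongr)

theorem finrank_range_le_sum_finrank_map {k M : Type*} [Field k] [AddCommGroup M] [Module k M]
    [Module.Finite k M] {ℳ : ℕ → Submodule k M} [DirectSum.Decomposition ℳ]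
    {N : ℕ} (hN : ∀ i, N < i → ℳ i = ⊥) (g : Module.End k M) :
    finrank k (range g) ≤ ∑ d ∈ Finset.range (N + 1), finrank k ((ℳ d).map g) := by
  have htop : ⊤ ≤ (Finset.range (N + 1)).sup ℳ := by
    rw [← (DirectSum.Decomposition.isInternal ℳ).submodule_iSup_eq_top]
    refine iSup_le fun d => ?_
    rcases lt_or_ge N d with hd | hd
    · rw [hN d hd]; exact bot_le
    · exact Finset.le_sup (Finset.mem_range_succ_iff.2 hd)
  have hrange : range g ≤ (Finset.range (N + 1)).sup fun d => (ℳ d).map g := by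
    rw [range_eq_map, Submodule.map_le_iff_le_comap]
    refine htop.trans (Finset.sup_le fun d hd => Submodule.map_le_iff_le_comap.1 ?_)
    exact Finset.le_sup (f := fun d => (ℳ d).map g) hd
  calc finrank k (range g) ≤ finrank k ↥((Finset.range (N + 1)).sup fun d => (ℳ d).map g) :=
        Submodule.finrank_mono hrange
    _ ≤ _ := Submodule.finrank_finset_sup_le_sum _ _

section Graded

variable {k A M : Type*} [Field k] [CommRing A] [Algebra k A]
  [AddCommGroup M] [Module A M] [Module k M] [IsScalarTower k A M]
  {𝒜 : ℕ → Submodule k A} {ℳ : ℕ → Submodule k M} [SetLike.GradedSMul 𝒜 ℳ]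
  {ℓ : A}

theorem map_lsmul_pow_le (hℓ : ℓ ∈ 𝒜 1) (s d : ℕ) :
    (ℳ d).map (((lsmul A M ℓ).restrictScalars k : Module.End k M) ^ s) ≤ ℳ (s + d) := by
  induction s with
  | zero => rw [pow_zero, zero_add, Module.End.one_eq_id, Submodule.map_id]
  | succ s ih =>
    rw [pow_succ', Module.End.mul_eq_comp, Submodule.map_comp,
      show s + 1 + d = 1 + (s + d) by omega]
    rintro _ ⟨x, hx, rfl⟩
    exact SetLike.GradedSMul.smul_mem hℓ (ih hx)

theorem finrank_map_lsmul_pow_le [Module.Finite k M] (hℓ : ℓ ∈ 𝒜 1) {s t : ℕ} (hs : s ≤ t)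
    (d : ℕ) :
    finrank k ((ℳ d).map (((lsmul A M ℓ).restrictScalars k : Module.End k M) ^ t)) ≤
      finrank k (ℳ (d + s)) := by
  rw [← Nat.sub_add_cancel hs, pow_add, Module.End.mul_eq_comp, Submodule.map_comp, add_comm d]
  exact (Submodule.finrank_map_le _ _).trans
    (Submodule.finrank_mono (map_lsmul_pow_le hℓ s d))

end Graded

theorem Nat.exists_run_start {P : ℕ → Prop} {d : ℕ} (hd : P d) :
    ∃ i ≤ d, (i = 0 ∨ ¬P (i - 1)) ∧ ∀ e, i ≤ e → e ≤ d → P e := by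
  induction d with
  | zero => exact ⟨0, le_rfl, Or.inl rfl, fun e _ he => by rwa [Nat.le_zero.1 he]⟩
  | succ d ih =>
    by_cases hprev : P d
    · obtain ⟨i, hid, hstart, hrun⟩ := ih hprev
      refine ⟨i, by omega, hstart, fun e hie hed => ?_⟩
      rcases Nat.lt_or_eq_of_le hed with hlt | rfl
      · exact hrun e hie (by omega)
      · exact hd
    · exact ⟨d + 1, le_rfl, Or.inr hprev, fun e h₁ h₂ => by rwa [le_antisymm h₂ h₁]⟩

theorem Nat.lt_add_sInf_not {P : ℕ → Prop} {N i m : ℕ} (hP : ∀ e, N < e → ¬P e)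
    (hrun : ∀ e, i ≤ e → e ≤ m → P e) : m < i + sInf {L | ¬P (i + L)} := by
  have hend : ¬P (i + sInf {L | ¬P (i + L)}) :=
    Nat.sInf_mem (s := {L | ¬P (i + L)}) ⟨N + 1, hP _ (by omega)⟩
  by_contra! h
  exact hend (hrun _ (Nat.le_add_right _ _) h)

theorem card_filter_forall_le_sum_segments (H : ℕ → ℕ) {N c : ℕ} (hH : ∀ e, N < e → H e < c)
    (t : ℕ) :
    ((Finset.range (N + 1)).filter fun d => ∀ s ≤ t, c ≤ H (d + s)).card ≤
      ∑ i ∈ (Finset.range (N + 1)).filter (fun i => c ≤ H i ∧ (i = 0 ∨ H (i - 1) < c)),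
        (sInf {L | H (i + L) < c} - t) := by
  -- every admissible `d` lies in the segment through it, at least `t` before its end
  have hcover : ((Finset.range (N + 1)).filter fun d => ∀ s ≤ t, c ≤ H (d + s)) ⊆
      ((Finset.range (N + 1)).filter (fun i => c ≤ H i ∧ (i = 0 ∨ H (i - 1) < c))).biUnion
        fun i => Finset.Ico i (i + (sInf {L | H (i + L) < c} - t)) := by
    intro d hd
    simp only [Finset.mem_filter, Finset.mem_range] at hd
    obtain ⟨hdN, hgood⟩ := hd
    obtain ⟨i, hid, hstart, hrun⟩ :=
      Nat.exists_run_start (P := fun e => c ≤ H e) (hgood 0 (Nat.zero_le _))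
    have hend : d + t < i + sInf {L | H (i + L) < c} := by
      have hrun' : ∀ e, i ≤ e → e ≤ d + t → c ≤ H e := fun e hie hed => by
        rcases le_or_gt e d with h | h
        · exact hrun e hie h
        · simpa [show d + (e - d) = e by omega] using hgood (e - d) (by omega)
      simpa only [not_le] using
        Nat.lt_add_sInf_not (P := fun e => c ≤ H e) (fun e he => not_le.2 (hH e he)) hrun'
    simp only [Finset.mem_biUnion, Finset.mem_filter, Finset.mem_range, Finset.mem_Ico, not_le]
      at hstart ⊢
    exact ⟨i, ⟨⟨by omega, hrun i le_rfl hid, hstart⟩, hid, by omega⟩⟩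
  refine (Finset.card_le_card hcover).trans (Finset.card_biUnion_le.trans ?_)
  simp

theorem sum_map_tsub_contiguousPartition (H : ℕ → ℕ) (N t : ℕ) :
    ((contiguousPartition H N).map (· - t)).sum =
      ∑ r ∈ Finset.range ((Finset.range (N + 1)).sup H),
        ∑ i ∈ (Finset.range (N + 1)).filter (fun i => r + 1 ≤ H i ∧ (i = 0 ∨ H (i - 1) < r + 1)),
          (sInf {L | H (i + L) < r + 1} - t) := by
  simp only [contiguousPartition, ← Multiset.map_filter_eq_filterMap, Multiset.map_bind,
    Multiset.sum_bind, Multiset.map_map]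
  rfl

theorem sum_le_sum_map_tsub_contiguousPartition (H : ℕ → ℕ) {N t : ℕ}
    (hH : ∀ e, N < e → H e = 0) (W : ℕ → ℕ) (hW : ∀ d s, s ≤ t → W d ≤ H (d + s)) :
    ∑ d ∈ Finset.range (N + 1), W d ≤ ((contiguousPartition H N).map (· - t)).sum := by
  set m := (Finset.range (N + 1)).sup H
  have hlayer : ∀ d ∈ Finset.range (N + 1), W d = ((Finset.range m).filter (· < W d)).card := by
    intro d hd
    have hWm : W d ≤ m := by simpa using (hW d 0 (Nat.zero_le t)).trans (Finset.le_sup hd)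
    rw [show (Finset.range m).filter (· < W d) = Finset.range (W d) by ext; simp; omega,
      Finset.card_range]
  calc ∑ d ∈ Finset.range (N + 1), W d
      = ∑ r ∈ Finset.range m, ((Finset.range (N + 1)).filter (r < W ·)).card := by
        simp only [Finset.sum_congr rfl hlayer, Finset.card_filter]
        exact Finset.sum_comm
    _ ≤ ∑ r ∈ Finset.range m,
          ((Finset.range (N + 1)).filter fun d => ∀ s ≤ t, r + 1 ≤ H (d + s)).card := by
        gcongr with r _ d _
        exact fun hr s hs => hr.trans_le (hW d s hs)
    _ ≤ _ := by
        rw [sum_map_tsub_contiguousPartition]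
        gcongr with r
        exact card_filter_forall_le_sum_segments H (fun e he => by simp [hH e he]) t

theorem jordan_type_le_contiguous_partition_general
    (k A : Type*) [Field k] [CommRing A] [Algebra k A]
    (𝒜 : ℕ → Submodule k A)
    (M : Type*) [AddCommGroup M] [Module A M] [Module k M] [IsScalarTower k A M]
    [Module.Finite k M]
    (ℳ : ℕ → Submodule k M) [SetLike.GradedSMul 𝒜 ℳ] [DirectSum.Decomposition ℳ]
    (N : ℕ) (hN : ∀ i, N < i → ℳ i = ⊥)
    (ℓ : A) (hℓ : ℓ ∈ 𝒜 1) :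
    DomLE (jordanType k ((LinearMap.lsmul A M ℓ).restrictScalars k))
      (contiguousPartition (fun i => Module.finrank k (ℳ i)) N) := by
  set f : Module.End k M := (lsmul A M ℓ).restrictScalars k
  refine domLE_of_forall_sum_map_tsub_le fun t => ?_
  calc ((jordanType k f).map (· - t)).sum
      ≤ finrank k (range (f ^ t)) := sum_map_tsub_jordanType_le f t
    _ ≤ ∑ d ∈ Finset.range (N + 1), finrank k ((ℳ d).map (f ^ t)) :=
        finrank_range_le_sum_finrank_map hN _
    _ ≤ _ := sum_le_sum_map_tsub_contiguousPartition _
        (fun e he => by simp [hN e he]) _ fun _ _ hs => finrank_map_lsmul_pow_le hℓ hs _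

theorem jordan_type_le_contiguous_partition
    (k A : Type*) [Field k] [CommRing A] [Algebra k A] [IsArtinianRing A]
    (𝒜 : ℕ → Submodule k A) [GradedAlgebra 𝒜]
    (M : Type*) [AddCommGroup M] [Module A M] [Module k M] [IsScalarTower k A M]
    [Module.Finite k M]
    (ℳ : ℕ → Submodule k M) [SetLike.GradedSMul 𝒜 ℳ] [DirectSum.Decomposition ℳ]
    (N : ℕ) (hN : ∀ i, N < i → ℳ i = ⊥)
    (ℓ : A) (hℓ : ℓ ∈ 𝒜 1) :
    DomLE (jordanType k ((LinearMap.lsmul A M ℓ).restrictScalars k))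
      (contiguousPartition (fun i => Module.finrank k (ℳ i)) N) :=
  jordan_type_le_contiguous_partition_general k A 𝒜 M ℳ N hN ℓ hℓ
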